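/- arXiv:0812.0147 — 2 statements merged into one kernel-verified Lean document; each statement's English description precedes it below -/
import Mathlib

section
/- In the cyclic copying process on {0,1}^L with k ones forming a single interval, the probability that the left endpoint of the 1-interval extends by at least j positions in one round equals 1/j! - 1/(k+j)!, where the round applies a uniformly random permutation order of sequential copy operations around the cycle. -/
/-!
Write `τ = σ⁻¹` for the update times. Position `p` is last written at time `τ p`, when it copies
the value that `p + 1` has at that moment. Following this back, the final value at `p` is the
initial value at `p + R`, where `R` is the length of the longest copy chain `p, p + 1, …, p + R - 1`
along which the update times strictly decrease. Position `L - i` therefore ends up `1` iff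
`i ≤ R < i + k`, and the event becomes: `L - j, …, L - 1` form a copy chain, but the `j + k`
positions `L - j, …, k - 1` do not. The update times of `r` given positions are strictly
decreasing for exactly a fraction `1 / r!` of all permutations, which gives `1/j! - 1/(j+k)!`.
-/

/-- One round of the cyclic copying process: positions are updated sequentially in the
order given by the permutation `σ`, each update overwriting position `σ j` with the
current value of position `σ j + 1` (mod `L`). -/
def cyclicRound {L : ℕ} [NeZero L] (σ : Equiv.Perm (Fin L)) (Γ : Fin L → Bool) :
    Fin L → Bool :=
  (List.finRange L).foldl (fun Δ t => Function.update Δ (σ t) (Δ (σ t + 1))) Γ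

theorem Nat.card_subtype_and_not_add_card {α : Type*} [Finite α] {P Q : α → Prop}
    (h : ∀ x, Q x → P x) :
    Nat.card {x // P x ∧ ¬Q x} + Nat.card {x // Q x} = Nat.card {x // P x} := by
  classical
  have := Fintype.ofFinite α
  simp only [Nat.card_eq_fintype_card]
  rw [← Fintype.card_subtype_or_disjoint _ _ fun _ h₁ h₂ x hx => (h₁ x hx).2 (h₂ x hx)]
  exact Fintype.card_congr (Equiv.subtypeEquivRight fun x => by grind)

/-- Every `σ` factors uniquely as `σ' * ρ`, where `σ' ∘ v` is strictly monotone and `ρ` permutes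
the range of `v` (as the permutation sorting `σ ∘ v`). -/
theorem Equiv.Perm.card_strictMono_comp_mul_factorial {α : Type*} [Fintype α] [LinearOrder α]
    {r : ℕ} (v : Fin r ↪ α) :
    Nat.card {σ : Perm α // StrictMono (σ ∘ v)} * r.factorial = (Fintype.card α).factorial := by
  set ext := viaEmbeddingHom v
  have comp_ext (σ : Perm α) (ρ : Perm (Fin r)) : (σ * ext ρ) ∘ v = σ ∘ v ∘ ρ :=
    funext fun m => congrArg σ (viaEmbedding_apply ρ v m)
  have inj (σ : Perm α) : Function.Injective (σ ∘ v) := σ.injective.comp v.injective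
  have sort_eq (σ : Perm α) (ρ : Perm (Fin r)) (h : StrictMono (σ ∘ v)) :
      Tuple.sort ((σ * ext ρ⁻¹) ∘ v) = ρ := by
    have hcomp : (σ * ext ρ⁻¹) ∘ v ∘ ρ = σ ∘ v := by
      rw [← Function.comp_assoc, comp_ext]; ext m; simp
    refine DFunLike.coe_injective ((inj (σ * ext ρ⁻¹)).comp_left ?_).symm
    exact Tuple.unique_monotone (hcomp ▸ h.monotone) (Tuple.monotone_sort _)
  let e : Perm α ≃ {σ : Perm α // StrictMono (σ ∘ v)} × Perm (Fin r) :=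
    { toFun σ := (⟨σ * ext (Tuple.sort (σ ∘ v)), by
          rw [comp_ext]
          exact (Tuple.monotone_sort _).strictMono_of_injective ((inj σ).comp (Equiv.injective _))⟩,
        Tuple.sort (σ ∘ v))
      invFun x := x.1.1 * ext x.2⁻¹
      left_inv σ := by simp [mul_assoc]
      right_inv := by
        rintro ⟨⟨σ, hσ⟩, ρ⟩
        refine Prod.ext (Subtype.ext ?_) (sort_eq σ ρ hσ)
        change σ * ext ρ⁻¹ * ext (Tuple.sort ((σ * ext ρ⁻¹) ∘ v)) = σ
        rw [sort_eq σ ρ hσ, mul_assoc, ← map_mul, inv_mul_cancel, map_one, mul_one] }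
  rw [← Fintype.card_perm, ← Nat.card_eq_fintype_card, Nat.card_congr e, Nat.card_prod,
    Nat.card_perm, Nat.card_fin]

namespace CyclicCopying

open Equiv Nat Fin.NatCast

variable {L : ℕ} [NeZero L] (σ : Perm (Fin L)) (Γ : Fin L → Bool)

def partialRound (t : ℕ) : Fin L → Bool :=
  ((List.finRange L).take t).foldl (fun Δ u => Function.update Δ (σ u) (Δ (σ u + 1))) Γ

lemma partialRound_succ {t : ℕ} (ht : t < L) :
    partialRound σ Γ (t + 1) =
      Function.update (partialRound σ Γ t) (σ ⟨t, ht⟩) (partialRound σ Γ t (σ ⟨t, ht⟩ + 1)) := by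
  rw [partialRound, List.take_add_one, List.getElem?_eq_getElem (by simpa using ht),
    List.getElem_finRange, Option.toList_some, List.foldl_append]
  rfl

lemma partialRound_self : partialRound σ Γ L = cyclicRound σ Γ := by
  rw [partialRound, List.take_of_length_le (by simp), cyclicRound]

/-- Position `p` is last written at time `σ.symm p`, when it copies the then-current value of
`p + 1`. -/
lemma partialRound_apply {t : ℕ} (ht : t ≤ L) (p : Fin L) :
    partialRound σ Γ t p =
      if (σ.symm p : ℕ) < t then partialRound σ Γ (σ.symm p) (p + 1) else Γ p := by
  induction t with
  | zero => simp [partialRound]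
  | succ t ih =>
    rw [partialRound_succ σ Γ (by omega)]
    by_cases hp : p = σ ⟨t, by omega⟩
    · subst hp
      simp
    · have hpt : (σ.symm p : ℕ) ≠ t := fun h => hp (by rw [← Equiv.symm_apply_eq]; exact Fin.ext h)
      rw [Function.update_of_ne hp, ih (by omega)]
      simp only [Nat.lt_succ_iff_lt_or_eq, hpt, or_false]

def IsCopyChain (a r : ℕ) : Prop :=
  ∀ m, m + 1 < r → σ.symm ((a + (m + 1) : ℕ) : Fin L) < σ.symm ((a + m : ℕ) : Fin L)

variable {σ}

lemma IsCopyChain.mono {a r r' : ℕ} (h : IsCopyChain σ a r) (hr : r' ≤ r) :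
    IsCopyChain σ a r' :=
  fun m hm => h m (by omega)

lemma IsCopyChain.shift {a r : ℕ} (h : IsCopyChain σ a r) (s : ℕ) :
    IsCopyChain σ (a + s) (r - s) := by
  intro m hm
  simpa only [Nat.add_assoc] using h (s + m) (by omega)

lemma IsCopyChain.append {a r₁ r₂ s : ℕ} (h₁ : IsCopyChain σ a r₁)
    (h₂ : IsCopyChain σ (a + s) r₂) (hs : s < r₁) : IsCopyChain σ a (s + r₂) := by
  intro m hm
  rcases Nat.lt_or_ge (m + 1) r₁ with hm₁ | hm₁
  · exact h₁ m hm₁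
  · have := h₂ (m - s) (by omega)
    rwa [show a + s + (m - s + 1) = a + (m + 1) by omega, show a + s + (m - s) = a + m by omega]
      at this

lemma isCopyChain_succ_succ {a r : ℕ} :
    IsCopyChain σ a (r + 2) ↔
      σ.symm ((a + 1 : ℕ) : Fin L) < σ.symm (a : Fin L) ∧ IsCopyChain σ (a + 1) (r + 1) := by
  refine ⟨fun h => ⟨h 0 (by omega), by simpa using h.shift 1⟩, fun ⟨h₀, h⟩ m hm => ?_⟩
  rcases m with _ | m
  · simpa using h₀
  · simpa only [show a + 1 + (m + 1) = a + (m + 1 + 1) by omega,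
      show a + 1 + m = a + (m + 1) by omega] using h m (by omega)

lemma isCopyChain_iff_strictAnti {a r : ℕ} :
    IsCopyChain σ a r ↔ StrictAnti fun m : Fin r => σ.symm ((a + m : ℕ) : Fin L) := by
  rcases r with _ | r
  · simp [IsCopyChain, Subsingleton.strictAnti]
  · rw [Fin.strictAnti_iff_succ_lt, IsCopyChain]
    exact ⟨fun h i => h i (by omega), fun h m hm => h ⟨m, by omega⟩⟩

lemma not_isCopyChain_of_lt {r : ℕ} (a : ℕ) (hr : L < r) : ¬IsCopyChain σ a r := by
  intro h
  have := isCopyChain_iff_strictAnti.mp h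
    (Fin.mk_lt_mk.mpr (NeZero.pos L) : (⟨0, by omega⟩ : Fin r) < ⟨L, hr⟩)
  simp at this

lemma exists_isCopyChain_maximal (σ : Perm (Fin L)) (a : ℕ) :
    ∃ r < L, IsCopyChain σ a (r + 1) ∧ ¬IsCopyChain σ a (r + 2) := by
  classical
  have hex : ∃ n, ¬IsCopyChain σ a n := ⟨L + 1, not_isCopyChain_of_lt a (by omega)⟩
  have hle := Nat.find_min' hex (not_isCopyChain_of_lt a (Nat.lt_succ_self L))
  have hpos : 2 ≤ Nat.find hex := by
    by_contra! h
    have h₁ : IsCopyChain σ a 1 := fun m hm => by omega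
    exact Nat.find_spec hex (h₁.mono (by omega))
  refine ⟨Nat.find hex - 2, by omega, ?_, ?_⟩
  · by_contra h
    exact Nat.find_min hex (by omega) h
  · rw [show Nat.find hex - 2 + 2 = Nat.find hex by omega]
    exact Nat.find_spec hex

lemma partialRound_apply_of_isCopyChain (r : ℕ) {a t : ℕ} (ht : t ≤ L)
    (hat : (σ.symm (a : Fin L) : ℕ) < t) (h : IsCopyChain σ a (r + 1))
    (hmax : ¬IsCopyChain σ a (r + 2)) :
    partialRound σ Γ t a = Γ ((a + (r + 1) : ℕ) : Fin L) := by
  induction r generalizing a t with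
  | zero =>
    have hstop : ¬σ.symm ((a + 1 : ℕ) : Fin L) < σ.symm (a : Fin L) :=
      fun h' => hmax (isCopyChain_succ_succ.mpr ⟨h', fun m hm => by omega⟩)
    rw [partialRound_apply σ Γ ht, if_pos hat, ← Nat.cast_succ,
      partialRound_apply σ Γ (by omega), if_neg (mt Fin.lt_def.mpr hstop)]
  | succ r ih =>
    obtain ⟨h₀, h'⟩ := isCopyChain_succ_succ.mp h
    rw [partialRound_apply σ Γ ht, if_pos hat, ← Nat.cast_succ,
      ih (by omega) (Fin.lt_def.mp h₀) h' fun h'' => hmax (isCopyChain_succ_succ.mpr ⟨h₀, h''⟩)]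
    congr 2
    omega

lemma cyclicRound_apply_of_isCopyChain {a r : ℕ} (h : IsCopyChain σ a (r + 1))
    (hmax : ¬IsCopyChain σ a (r + 2)) : cyclicRound σ Γ a = Γ ((a + (r + 1) : ℕ) : Fin L) := by
  rw [← partialRound_self, partialRound_apply_of_isCopyChain Γ r le_rfl (Fin.isLt _) h hmax]

lemma cyclicRound_interval_eq_true_iff (σ : Perm (Fin L)) {i k : ℕ} (hi : 1 ≤ i)
    (hik : i + k ≤ L) :
    cyclicRound σ (fun q => decide (q.val < k)) ⟨L - i, by omega⟩ = true ↔
      IsCopyChain σ (L - i) i ∧ ¬IsCopyChain σ (L - i) (i + k) := by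
  obtain ⟨R, hRL, hR, hmax⟩ := exists_isCopyChain_maximal σ (L - i)
  have hlen (n : ℕ) : IsCopyChain σ (L - i) n ↔ n ≤ R + 1 :=
    ⟨fun h => by by_contra! hn; exact hmax (h.mono hn), hR.mono⟩
  have hp : (⟨L - i, by omega⟩ : Fin L) = ((L - i : ℕ) : Fin L) := (Fin.cast_val_eq_self _).symm
  rw [hp, cyclicRound_apply_of_isCopyChain _ hR hmax, hlen, hlen, decide_eq_true_iff,
    Fin.val_natCast]
  rcases Nat.lt_or_ge (R + 1) i with h | h
  · rw [Nat.mod_eq_of_lt (by omega)]; omega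
  · rw [Nat.mod_eq_sub_mod (by omega), Nat.mod_eq_of_lt (by omega)]; omega

lemma forall_cyclicRound_interval_eq_true_iff (σ : Perm (Fin L)) {j k : ℕ} (hj : 1 ≤ j)
    (hjk : j + k ≤ L) :
    (∀ (i : ℕ) (_ : 1 ≤ i) (_ : i ≤ j),
        cyclicRound σ (fun q => decide (q.val < k)) ⟨L - i, by omega⟩ = true) ↔
      IsCopyChain σ (L - j) j ∧ ¬IsCopyChain σ (L - j) (j + k) := by
  refine ⟨fun h => (cyclicRound_interval_eq_true_iff σ hj hjk).mp (h j hj le_rfl), ?_⟩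
  rintro ⟨hj', hjk'⟩ i hi hij
  have hstart : L - j + (j - i) = L - i := by omega
  refine (cyclicRound_interval_eq_true_iff σ hi (by omega)).mpr ⟨?_, fun hik' => hjk' ?_⟩
  · simpa [hstart, show j - (j - i) = i by omega] using hj'.shift (j - i)
  · have := hj'.append (s := j - i) (by rwa [hstart]) (by omega)
    rwa [show j - i + (i + k) = j + k by omega] at this

lemma card_isCopyChain_div_factorial (a : ℕ) {r : ℕ} (hr : r ≤ L) :
    (Nat.card {σ : Perm (Fin L) // IsCopyChain σ a r} : ℚ) / L ! = 1 / r ! := by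
  -- `StrictMono` into the order dual is `StrictAnti`.
  let v : Fin r ↪ (Fin L)ᵒᵈ :=
    ⟨fun m => OrderDual.toDual ((a + m : ℕ) : Fin L), fun m m' h => Fin.ext <| by
      have h' : ((m : ℕ) : Fin L) = ((m' : ℕ) : Fin L) := by
        simpa only [Nat.cast_add, add_right_inj] using OrderDual.toDual.injective h
      simpa [Fin.val_cast_of_lt (m.isLt.trans_le hr), Fin.val_cast_of_lt (m'.isLt.trans_le hr)]
        using congrArg Fin.val h'⟩
  have e : {σ : Perm (Fin L) // IsCopyChain σ a r} ≃
      {σ : Perm (Fin L)ᵒᵈ // StrictMono (σ ∘ v)} :=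
    (Equiv.inv (Perm (Fin L))).subtypeEquiv fun σ => isCopyChain_iff_strictAnti
  have h := Perm.card_strictMono_comp_mul_factorial v
  rw [Fintype.card_orderDual, Fintype.card_fin] at h
  rw [Nat.card_congr e, div_eq_div_iff (by positivity) (by positivity), one_mul]
  exact_mod_cast h

end CyclicCopying

open CyclicCopying in
/-- In the cyclic copying process started from an interval of `k` ones (positions
`0, …, k-1`) and `L - k` zeros, the probability (over the uniformly random permutation
order of one round) that the left endpoint of the 1-interval extends by at least `j`
positions (i.e. positions `L - 1, …, L - j` become `1`) equals `1/j! - 1/(k+j)!`. -/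
theorem stmt5 (L k j : ℕ) [NeZero L] (hj1 : 1 ≤ j) (hj2 : j ≤ L - k) :
    (Nat.card {σ : Equiv.Perm (Fin L) //
        ∀ (i : ℕ) (hi : 1 ≤ i) (hij : i ≤ j),
          cyclicRound σ (fun q => decide (q.val < k)) ⟨L - i, by omega⟩ = true} : ℚ)
      / (Nat.factorial L : ℚ)
    = 1 / Nat.factorial j - 1 / Nat.factorial (k + j) := by
  rw [Nat.card_congr (Equiv.subtypeEquivRight fun σ =>
    forall_cyclicRound_interval_eq_true_iff σ hj1 (k := k) (by omega))]
  have hsplit : Nat.card {σ : Equiv.Perm (Fin L) //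
        IsCopyChain σ (L - j) j ∧ ¬IsCopyChain σ (L - j) (j + k)} +
      Nat.card {σ : Equiv.Perm (Fin L) // IsCopyChain σ (L - j) (j + k)} =
      Nat.card {σ : Equiv.Perm (Fin L) // IsCopyChain σ (L - j) j} :=
    Nat.card_subtype_and_not_add_card fun σ h => h.mono (by omega)
  rw [← card_isCopyChain_div_factorial (L := L) (L - j) (r := j) (by omega), add_comm k j,
    ← card_isCopyChain_div_factorial (L := L) (L - j) (r := j + k) (by omega), ← sub_div,
    ← hsplit]
  push_cast
  ring
end

section
/- Let F be a satisfiable CNF formula whose factor graph is a tree, and consider Warning Propagation messages toward a fixed root. Define messages inductively: for an edge (C, x) directed towards the root, C → x = 1 iff every other variable y in C has Σ over clauses C' ≠ C containing y in the subtree below (C,x) of (C' → y signed by y's polarity in C') strictly favoring the polarity opposite to y's occurrence in C. If F is satisfiable by the all-TRUE assignment, then for every edge (C,x) towards the root, the (uniquely-determined) fixed-point message satisfies: C → x = 1 implies x appears positively in C. -/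
variable {α : Type*} [DecidableEq α]

/-- `x` occurs (positively or negatively) in the clause `C`; clauses are finite sets of
literals, a literal being a variable together with a polarity. -/
def occursIn (x : α) (C : Finset (α × Bool)) : Prop :=
  (x, true) ∈ C ∨ (x, false) ∈ C

/-- The factor graph of a CNF formula `F`: a bipartite graph between variables and
clauses, with an edge whenever the variable occurs in the clause. -/
def litFactorGraph (F : Finset (Finset (α × Bool))) :
    SimpleGraph (α ⊕ Finset (α × Bool)) where
  Adj u v :=
    (∃ x C, u = Sum.inl x ∧ v = Sum.inr C ∧ C ∈ F ∧ occursIn x C) ∨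
    (∃ x C, v = Sum.inl x ∧ u = Sum.inr C ∧ C ∈ F ∧ occursIn x C)
  symm := by
    constructor
    rintro u v (⟨x, C, h1, h2, h3, h4⟩ | ⟨x, C, h1, h2, h3, h4⟩)
    · exact Or.inr ⟨x, C, h1, h2, h3, h4⟩
    · exact Or.inl ⟨x, C, h1, h2, h3, h4⟩
  loopless := by
    constructor
    rintro u (⟨x, C, rfl, h2, -⟩ | ⟨x, C, rfl, h2, -⟩) <;> simp at h2

/-- The net Warning Propagation bias of variable `y` as seen by clause `C`: the number
of warnings from clauses (other than `C`) where `y` occurs positively minus the number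
of warnings from clauses where `y` occurs negatively. -/
def wpBias (F : Finset (Finset (α × Bool))) (M : Finset (α × Bool) → α → Bool)
    (y : α) (C : Finset (α × Bool)) : ℤ :=
  ∑ C' ∈ F.erase C,
    ((if (y, true) ∈ C' ∧ M C' y = true then 1 else 0)
      - (if (y, false) ∈ C' ∧ M C' y = true then 1 else 0))

/-! If `C → x = 1` but `x` does not occur positively in `C`, pick a positive literal `y` of `C`
(the all-TRUE assignment satisfies `C`). The warning forces the bias of `y` at `C` to be negative,
so some clause `C' ≠ C` in which `y` occurs only negatively sends `C' → y = 1`: another warning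
against the planted value. In a tree, the part of the factor graph beyond the edge `(C', y)` is
strictly contained in the part beyond `(C, x)`, so this descent cannot go on forever. -/

namespace SimpleGraph

variable {V : Type*} {G : SimpleGraph V}

def reachableAvoiding (G : SimpleGraph V) (a v : V) : Set V :=
  {w | ∃ p : G.Walk v w, a ∉ p.support}

theorem IsAcyclic.support_subset_support_of_isPath (hG : G.IsAcyclic) {u w : V}
    {q : G.Walk u w} (hq : q.IsPath) (p : G.Walk u w) : q.support ⊆ p.support := by
  classical
  have hbypass : p.bypass = q :=
    congrArg Subtype.val ((hG.subsingleton_path u w).elim ⟨_, p.bypass_isPath⟩ ⟨q, hq⟩)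
  exact hbypass ▸ p.support_bypass_subset_support

theorem IsAcyclic.mem_support_of_adj_of_adj (hG : G.IsAcyclic) {u v w : V} (huv : G.Adj u v)
    (hvw : G.Adj v w) (huw : u ≠ w) (p : G.Walk u w) : v ∈ p.support := by
  have hq : (Walk.cons huv (Walk.cons hvw Walk.nil)).IsPath := by
    simp [huv.ne, hvw.ne, huw]
  exact hG.support_subset_support_of_isPath hq p (by simp)

theorem IsAcyclic.reachableAvoiding_subset (hG : G.IsAcyclic) {x c y c' : V}
    (hxc : G.Adj x c) (hcy : G.Adj c y) (hxy : x ≠ y) (hyc' : G.Adj y c') (hc'c : c' ≠ c) :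
    G.reachableAvoiding y c' ⊆ G.reachableAvoiding x c := by
  classical
  rintro w ⟨p, hp⟩
  -- a walk from `c'` to `x` avoiding `y` would close a cycle through `c`
  have hx_not_mem : x ∉ p.support := by
    intro hx
    set q := p.takeUntil x hx
    have hqy : y ∉ q.support := fun h => hp (p.support_takeUntil_subset_support hx h)
    have hcq : c ∈ q.support := by
      have := hG.mem_support_of_adj_of_adj hcy.symm hxc.symm hxy.symm (Walk.cons hyc' q)
      simpa [hcy.ne] using this
    exact hqy (q.support_takeUntil_subset_support hcq
      (hG.mem_support_of_adj_of_adj hyc'.symm hcy.symm hc'c (q.takeUntil c hcq)))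
  exact ⟨Walk.cons hcy (Walk.cons hyc' p), by simp [hxc.ne, hxy, hx_not_mem]⟩

end SimpleGraph

open SimpleGraph

variable {F : Finset (Finset (α × Bool))} {M : Finset (α × Bool) → α → Bool}
  {C : Finset (α × Bool)} {x y : α}

omit [DecidableEq α] in
theorem litFactorGraph_adj (hC : C ∈ F) (hy : occursIn y C) :
    (litFactorGraph F).Adj (Sum.inl y) (Sum.inr C) :=
  Or.inl ⟨y, C, rfl, rfl, hC, hy⟩

open Classical in
noncomputable def clausesBeyond (F : Finset (Finset (α × Bool))) (C : Finset (α × Bool))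
    (x : α) : Finset (Finset (α × Bool)) :=
  F.filter fun D => Sum.inr D ∈ (litFactorGraph F).reachableAvoiding (Sum.inl x) (Sum.inr C)

omit [DecidableEq α] in
theorem card_clausesBeyond_lt (htree : (litFactorGraph F).IsAcyclic) {C' : Finset (α × Bool)}
    (hC : C ∈ F) (hC' : C' ∈ F) (hne : C' ≠ C) (hxy : x ≠ y) (hx : occursIn x C)
    (hyC : occursIn y C) (hyC' : occursIn y C') :
    (clausesBeyond F C' y).card < (clausesBeyond F C x).card := by
  classical
  have hsub := htree.reachableAvoiding_subset (litFactorGraph_adj hC hx)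
    (litFactorGraph_adj hC hyC).symm (Sum.inl_injective.ne hxy) (litFactorGraph_adj hC' hyC')
    (Sum.inr_injective.ne hne)
  refine Finset.card_lt_card ((Finset.ssubset_iff_of_subset ?_).mpr ⟨C, ?_, ?_⟩)
  · exact Finset.monotone_filter_right _ fun _ _ hD => hsub hD
  · exact Finset.mem_filter.mpr ⟨hC, Walk.nil, by simp⟩
  · intro hmem
    obtain ⟨p, hp⟩ := (Finset.mem_filter.mp hmem).2
    exact hp (htree.mem_support_of_adj_of_adj (litFactorGraph_adj hC' hyC').symm
      (litFactorGraph_adj hC hyC) (Sum.inr_injective.ne hne) p)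

theorem exists_warning_of_wpBias_neg (h : wpBias F M y C < 0) :
    ∃ C' ∈ F.erase C, (y, false) ∈ C' ∧ (y, true) ∉ C' ∧ M C' y = true := by
  by_contra hnone
  push Not at hnone
  refine h.not_ge (Finset.sum_nonneg fun C' hC' => ?_)
  have := hnone C' hC'
  split_ifs <;> simp_all

/-- On a tree factor graph of a formula satisfied by the all-TRUE assignment, any
Warning Propagation fixed point `M` has the property that every message `C → x = 1`
directed towards a fixed root `r` implies that `x` appears positively in `C`. -/
theorem stmt14 (F : Finset (Finset (α × Bool))) (M : Finset (α × Bool) → α → Bool)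
    (hsat : ∀ C ∈ F, ∃ x, (x, true) ∈ C)
    (htree : (litFactorGraph F).IsAcyclic)
    (hfix : ∀ C ∈ F, ∀ x : α, occursIn x C →
      (M C x = true ↔ ∀ y : α, y ≠ x → ∀ b : Bool, (y, b) ∈ C →
        (if b then wpBias F M y C < 0 else 0 < wpBias F M y C)))
    (r : α ⊕ Finset (α × Bool)) :
    ∀ C ∈ F, ∀ x : α, occursIn x C →
      (∀ p : (litFactorGraph F).Walk (Sum.inr C) r, p.IsPath → Sum.inl x ∈ p.support) →
      M C x = true → (x, true) ∈ C := by
  rintro C hC x hx - hM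
  induction hn : (clausesBeyond F C x).card using Nat.strong_induction_on generalizing C x with
  | _ n ih =>
    by_contra hxt
    obtain ⟨y, hy⟩ := hsat C hC
    have hyx : y ≠ x := by rintro rfl; exact hxt hy
    have hbias : wpBias F M y C < 0 := by simpa using (hfix C hC x hx).mp hM y hyx true hy
    obtain ⟨C', hC', hyf, hyt, hM'⟩ := exists_warning_of_wpBias_neg hbias
    have hC'F := Finset.mem_of_mem_erase hC'
    have hlt := card_clausesBeyond_lt htree hC hC'F (Finset.ne_of_mem_erase hC') hyx.symm hx
      (Or.inl hy) (Or.inr hyf)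
    exact hyt (ih _ (hn ▸ hlt) C' hC'F y (Or.inr hyf) hM' rfl)
end
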